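/- arXiv:2402.04834 — 2 statements merged into one kernel-verified Lean document; each statement's English description precedes it below -/
import Mathlib

section
/- Let T be a tensor network on graph G = (V,E) with converged BP messages, and let m̂_{u→v} be the messages rescaled so that Σ_{x_e} m̂_{u→v}(x_e)·m̂_{v→u}(x_e) = 1 for each edge e = (u,v). Then e^{-F_Bethe(T)} = ∏_{v∈V} Tr(T_v · ∏_{u∈N_v} m̂_{u→v}), i.e., the Bethe free-energy contraction estimate equals the product over vertices of the local star-network contractions with normalized incoming messages. -/
open Finset

variable {V : Type*} [Fintype V] [DecidableEq V] {D : ℕ}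

/-- Restriction of a global edge-variable assignment `x` to the edges incident to `v`,
viewed as an assignment of the bond variables of the tensor sitting at `v`. -/
def edgeRestrict (G : SimpleGraph V) [DecidableRel G.Adj]
    (x : ↥G.edgeFinset → Fin D) (v : V) : ↥(G.neighborFinset v) → Fin D :=
  fun u => x ⟨s(v, (u : V)), by
    rw [SimpleGraph.mem_edgeFinset, SimpleGraph.mem_edgeSet]
    exact (SimpleGraph.mem_neighborFinset G v (u : V)).mp u.2⟩

/-- The contraction value `Tr(𝒯)` of a tensor network `𝒯` on the graph `G`:
the sum, over all assignments of the bond variables (one variable of dimension `D`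
per edge), of the product of all tensor entries. -/
noncomputable def TNcontract (G : SimpleGraph V) [DecidableRel G.Adj]
    (T : ∀ v : V, (↥(G.neighborFinset v) → Fin D) → ℝ) : ℝ :=
  ∑ x : ↥G.edgeFinset → Fin D, ∏ v, T v (edgeRestrict G x v)

/-- One round of the BP message-update rule for tensor networks:
`m'_{v→u}(y) = Tr(T_v · ∏_{u' ∈ N_v \ {u}} m_{u'→v})`, the contraction of the tensor
at `v` with all incoming messages of the previous round except the one from `u`. -/
noncomputable def BPupdate (G : SimpleGraph V) [DecidableRel G.Adj]
    (T : ∀ v : V, (↥(G.neighborFinset v) → Fin D) → ℝ)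
    (m : V → V → Fin D → ℝ) : V → V → Fin D → ℝ :=
  fun v u y =>
    if hu : u ∈ G.neighborFinset v then
      ∑ z : ↥(G.neighborFinset v) → Fin D,
        if z ⟨u, hu⟩ = y then
          T v z * ∏ w : ↥(G.neighborFinset v),
            (if (w : V) = u then 1 else m (w : V) v (z w))
        else 0
    else 0

/-- The normalization constant `Z_e` of the edge marginal on the edge `(u,v)`. -/
noncomputable def Zedge (m : V → V → Fin D → ℝ) (u v : V) : ℝ :=
  ∑ y : Fin D, m u v y * m v u y

/-- The BP edge marginal `P_e(x_e) = m_{u→v}(x_e) m_{v→u}(x_e) / Z_e`. -/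
noncomputable def Pedge (m : V → V → Fin D → ℝ) (u v : V) (y : Fin D) : ℝ :=
  m u v y * m v u y / Zedge m u v

/-- The normalization constant `Z_v` of the vertex marginal at `v`; equivalently the
contraction `Tr(T_v · ∏_{u ∈ N_v} m_{u→v})` of `T_v` with all incoming messages. -/
noncomputable def Zvert (G : SimpleGraph V) [DecidableRel G.Adj]
    (T : ∀ v : V, (↥(G.neighborFinset v) → Fin D) → ℝ)
    (m : V → V → Fin D → ℝ) (v : V) : ℝ :=
  ∑ z : ↥(G.neighborFinset v) → Fin D, T v z * ∏ w : ↥(G.neighborFinset v), m (w : V) v (z w)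

/-- The BP vertex marginal `P_v(x_v) = T_v(x_v) ∏_{u ∈ N_v} m_{u→v}(x_e) / Z_v`. -/
noncomputable def Pvert (G : SimpleGraph V) [DecidableRel G.Adj]
    (T : ∀ v : V, (↥(G.neighborFinset v) → Fin D) → ℝ)
    (m : V → V → Fin D → ℝ) (v : V) (z : ↥(G.neighborFinset v) → Fin D) : ℝ :=
  (T v z * ∏ w : ↥(G.neighborFinset v), m (w : V) v (z w)) / Zvert G T m v

/-- The Bethe free energy
`F_Bethe = Σ_v Σ_{x_v} P_v ln(P_v / T_v) − Σ_e Σ_{x_e} P_e ln P_e`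
computed from the messages `m` (each edge `{u,v}` is counted once, whence the
factor `1/2` in front of the sum over ordered adjacent pairs). -/
noncomputable def FBethe (G : SimpleGraph V) [DecidableRel G.Adj]
    (T : ∀ v : V, (↥(G.neighborFinset v) → Fin D) → ℝ)
    (m : V → V → Fin D → ℝ) : ℝ :=
  (∑ v, ∑ z : ↥(G.neighborFinset v) → Fin D,
      Pvert G T m v z * Real.log (Pvert G T m v z / T v z))
  - (1 / 2) * ∑ v, ∑ u ∈ G.neighborFinset v, ∑ y : Fin D,
      Pedge m u v y * Real.log (Pedge m u v y)

/-!
The Bethe free energy sees the messages only through the beliefs `P_v` and `P_e`, and these do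
not change when each message is rescaled by a nonzero constant; so `F_Bethe` may be computed from
the normalized messages `m̂`. Fixed-point messages make the beliefs locally consistent: `P_e` is
the marginal of `P_v` on the bond `e`. For positive, locally consistent messages, expanding the
logarithms and summing the vertex terms through these marginals gives
`F_Bethe = ½ Σ_{u ~ v} ln Z_e − Σ_v ln Z_v` (the first sum over ordered adjacent pairs).
For `m̂` every `Z_e` is `1`, whence `e^{-F_Bethe} = ∏_v Z_v(m̂)`.
-/

lemma Fintype.prod_eq_mul_prod_ite_one {ι M : Type*} [Fintype ι] [DecidableEq ι] [CommMonoid M]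
    (f : ι → M) (i : ι) : ∏ j, f j = f i * ∏ j, if j = i then 1 else f j := by
  rw [Fintype.prod_eq_mul_prod_compl i, Fintype.prod_eq_mul_prod_compl i, if_pos rfl, one_mul]
  congr 1
  exact Finset.prod_congr rfl fun j hj => (if_neg (by simpa using hj)).symm

lemma SimpleGraph.sum_sum_neighborFinset_comm {α M : Type*} [Fintype α] [AddCommMonoid M]
    (G : SimpleGraph α) [DecidableRel G.Adj] (f : α → α → M) :
    ∑ v, ∑ u ∈ G.neighborFinset v, f u v = ∑ v, ∑ u ∈ G.neighborFinset v, f v u := by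
  simp_rw [SimpleGraph.neighborFinset_eq_filter, sum_filter]
  rw [sum_comm]
  simp_rw [G.adj_comm]

lemma SimpleGraph.adj_of_mem_neighborFinset {α : Type*} {G : SimpleGraph α} {u v : α}
    [Fintype (G.neighborSet v)] (hu : u ∈ G.neighborFinset v) : G.Adj u v :=
  ((G.mem_neighborFinset v u).mp hu).symm

section

omit [Fintype V] [DecidableEq V]

variable {m m' : V → V → Fin D → ℝ} {u v : V}

lemma Pedge_comm (y : Fin D) : Pedge m u v y = Pedge m v u y := by
  simp only [Pedge, Zedge, mul_comm (m u v _)]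

lemma sum_Pedge (hZ : Zedge m u v ≠ 0) : ∑ y, Pedge m u v y = 1 := by
  simp only [Pedge]
  rw [← sum_div, ← Zedge, div_self hZ]

lemma Pedge_eq_of_rescale {a b : ℝ} (ha0 : a ≠ 0) (hb0 : b ≠ 0)
    (ha : ∀ y, m' u v y = a * m u v y) (hb : ∀ y, m' v u y = b * m v u y) (y : Fin D) :
    Pedge m' u v y = Pedge m u v y := by
  have hprod : ∀ y, m' u v y * m' v u y = a * b * (m u v y * m v u y) :=
    fun y => by rw [ha, hb]; ring
  rw [Pedge, Pedge, Zedge, Zedge, hprod, sum_congr rfl fun y _ => hprod y, ← mul_sum,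
    mul_div_mul_left _ _ (mul_ne_zero ha0 hb0)]

lemma sum_Pedge_mul_log_Pedge (huv : ∀ y, 0 < m u v y) (hvu : ∀ y, 0 < m v u y)
    (hZ : Zedge m u v ≠ 0) :
    ∑ y, Pedge m u v y * Real.log (Pedge m u v y)
      = ∑ y, Pedge m u v y * Real.log (m u v y) + ∑ y, Pedge m u v y * Real.log (m v u y)
        - Real.log (Zedge m u v) := by
  have hlog : ∀ y, Real.log (Pedge m u v y)
      = Real.log (m u v y) + Real.log (m v u y) - Real.log (Zedge m u v) := fun y => by
    rw [Pedge, Real.log_div (mul_pos (huv y) (hvu y)).ne' hZ,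
      Real.log_mul (huv y).ne' (hvu y).ne']
  simp_rw [hlog, mul_sub, mul_add, sum_sub_distrib, sum_add_distrib, ← sum_mul, sum_Pedge hZ,
    one_mul]

end

section

variable (G : SimpleGraph V) [DecidableRel G.Adj]
  (T : ∀ v : V, (↥(G.neighborFinset v) → Fin D) → ℝ)

def LocallyConsistent (m : V → V → Fin D → ℝ) : Prop :=
  ∀ v u (hu : u ∈ G.neighborFinset v) y,
    ∑ z with z ⟨u, hu⟩ = y, Pvert G T m v z = Pedge m u v y

variable {G T} {m m' : V → V → Fin D → ℝ}

lemma LocallyConsistent.sum_Pvert_mul (h : LocallyConsistent G T m) {v u : V}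
    (hu : u ∈ G.neighborFinset v) (g : Fin D → ℝ) :
    ∑ z, Pvert G T m v z * g (z ⟨u, hu⟩) = ∑ y, Pedge m u v y * g y := by
  rw [← sum_fiberwise univ (fun z => z ⟨u, hu⟩)]
  refine sum_congr rfl fun y _ => ?_
  rw [← h v u hu y, sum_mul]
  exact sum_congr rfl fun z hz => by rw [(mem_filter.mp hz).2]

lemma sum_filter_mul_prod_eq_mul_BPupdate {v u : V} (hu : u ∈ G.neighborFinset v) (y : Fin D) :
    ∑ z with z ⟨u, hu⟩ = y, T v z * ∏ w : ↥(G.neighborFinset v), m w v (z w)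
      = m u v y * BPupdate G T m v u y := by
  rw [BPupdate, dif_pos hu, ← sum_filter, mul_sum]
  refine sum_congr rfl fun z hz => ?_
  rw [Fintype.prod_eq_mul_prod_ite_one _ ⟨u, hu⟩, (mem_filter.mp hz).2]
  simp only [Subtype.ext_iff]
  ring

theorem locallyConsistent_of_isFixedPt
    (hfix : ∀ u v, G.Adj u v → ∀ y, BPupdate G T m v u y = m v u y) :
    LocallyConsistent G T m := by
  intro v u hu y
  have hfiber : ∀ y,
      ∑ z with z ⟨u, hu⟩ = y, T v z * ∏ w : ↥(G.neighborFinset v), m w v (z w)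
        = m u v y * m v u y := fun y => by
    rw [sum_filter_mul_prod_eq_mul_BPupdate, hfix u v (G.adj_of_mem_neighborFinset hu)]
  have hZ : Zvert G T m v = Zedge m u v := by
    rw [Zvert, ← sum_fiberwise univ fun z => z ⟨u, hu⟩]
    exact sum_congr rfl fun y _ => hfiber y
  simp only [Pvert, Pedge]
  rw [← sum_div, hfiber, hZ]

lemma Pvert_eq_of_rescale
    (hscale : ∀ u v, G.Adj u v → ∃ c : ℝ, c ≠ 0 ∧ ∀ y, m' u v y = c * m u v y)
    (v : V) (z : ↥(G.neighborFinset v) → Fin D) : Pvert G T m' v z = Pvert G T m v z := by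
  choose c hc0 hc using fun w : ↥(G.neighborFinset v) =>
    hscale w v (G.adj_of_mem_neighborFinset w.2)
  have hweight : ∀ z : ↥(G.neighborFinset v) → Fin D,
      T v z * ∏ w : ↥(G.neighborFinset v), m' w v (z w)
        = (∏ w, c w) * (T v z * ∏ w : ↥(G.neighborFinset v), m w v (z w)) :=
    fun z => by simp_rw [hc, prod_mul_distrib]; ring
  rw [Pvert, Pvert, Zvert, Zvert, hweight, sum_congr rfl fun z _ => hweight z, ← mul_sum,
    mul_div_mul_left _ _ (prod_ne_zero_iff.mpr fun w _ => hc0 w)]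

lemma FBethe_congr
    (hPv : ∀ v z, Pvert G T m' v z = Pvert G T m v z)
    (hPe : ∀ u v, G.Adj u v → ∀ y, Pedge m' u v y = Pedge m u v y) :
    FBethe G T m' = FBethe G T m := by
  simp only [FBethe, hPv]
  congr 2
  refine sum_congr rfl fun v _ => sum_congr rfl fun u hu => ?_
  simp only [hPe u v (G.adj_of_mem_neighborFinset hu)]

lemma LocallyConsistent.congr (h : LocallyConsistent G T m)
    (hPv : ∀ v z, Pvert G T m' v z = Pvert G T m v z)
    (hPe : ∀ u v, G.Adj u v → ∀ y, Pedge m' u v y = Pedge m u v y) :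
    LocallyConsistent G T m' := by
  intro v u hu y
  simp only [hPv, hPe u v (G.adj_of_mem_neighborFinset hu)]
  exact h v u hu y

lemma Zvert_pos (hT : ∀ v z, 0 < T v z) (hm : ∀ u v, G.Adj u v → ∀ y, 0 < m u v y) (v : V)
    (hz : Nonempty (↥(G.neighborFinset v) → Fin D)) : 0 < Zvert G T m v :=
  sum_pos (fun z _ => mul_pos (hT v z) (prod_pos fun w _ =>
    hm _ _ (G.adj_of_mem_neighborFinset w.2) _)) univ_nonempty

lemma sum_Pvert {v : V} (hZ : Zvert G T m v ≠ 0) : ∑ z, Pvert G T m v z = 1 := by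
  simp only [Pvert]
  rw [← sum_div, ← Zvert, div_self hZ]

lemma LocallyConsistent.sum_Pvert_mul_log_div (h : LocallyConsistent G T m)
    (hT : ∀ v z, 0 < T v z) (hm : ∀ u v, G.Adj u v → ∀ y, 0 < m u v y) {v : V}
    (hZ : Zvert G T m v ≠ 0) :
    ∑ z, Pvert G T m v z * Real.log (Pvert G T m v z / T v z)
      = ∑ u ∈ G.neighborFinset v, ∑ y, Pedge m u v y * Real.log (m u v y)
        - Real.log (Zvert G T m v) := by
  have hm' : ∀ (w : ↥(G.neighborFinset v)) y, m w v y ≠ 0 :=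
    fun w y => (hm _ _ (G.adj_of_mem_neighborFinset w.2) y).ne'
  have hlog : ∀ z : ↥(G.neighborFinset v) → Fin D, Real.log (Pvert G T m v z / T v z)
      = ∑ w : ↥(G.neighborFinset v), Real.log (m w v (z w)) - Real.log (Zvert G T m v) :=
    fun z => by
      rw [Pvert, mul_div_assoc, mul_div_cancel_left₀ _ (hT v z).ne',
        Real.log_div (prod_ne_zero_iff.mpr fun w _ => hm' w _) hZ,
        Real.log_prod fun w _ => hm' w _]
  simp_rw [hlog, mul_sub, mul_sum, sum_sub_distrib, ← sum_mul, sum_Pvert hZ, one_mul]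
  rw [sum_comm, ← sum_coe_sort (G.neighborFinset v)]
  congr 1
  exact sum_congr rfl fun w _ => h.sum_Pvert_mul w.2 fun y => Real.log (m w v y)

theorem LocallyConsistent.FBethe_eq (h : LocallyConsistent G T m)
    (hT : ∀ v z, 0 < T v z) (hm : ∀ u v, G.Adj u v → ∀ y, 0 < m u v y)
    (hZv : ∀ v, Zvert G T m v ≠ 0) (hZe : ∀ u v, G.Adj u v → Zedge m u v ≠ 0) :
    FBethe G T m = 1 / 2 * ∑ v, ∑ u ∈ G.neighborFinset v, Real.log (Zedge m u v)
      - ∑ v, Real.log (Zvert G T m v) := by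
  set L := ∑ v, ∑ u ∈ G.neighborFinset v, ∑ y, Pedge m u v y * Real.log (m u v y)
  have hvert : ∑ v, ∑ z, Pvert G T m v z * Real.log (Pvert G T m v z / T v z)
      = L - ∑ v, Real.log (Zvert G T m v) := by
    rw [← sum_sub_distrib]
    exact sum_congr rfl fun v _ => h.sum_Pvert_mul_log_div hT hm (hZv v)
  have hedge : ∑ v, ∑ u ∈ G.neighborFinset v, ∑ y, Pedge m u v y * Real.log (Pedge m u v y)
      = L + L - ∑ v, ∑ u ∈ G.neighborFinset v, Real.log (Zedge m u v) := by
    have hswap :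
        ∑ v, ∑ u ∈ G.neighborFinset v, ∑ y, Pedge m u v y * Real.log (m v u y) = L := by
      rw [G.sum_sum_neighborFinset_comm fun u v => ∑ y, Pedge m u v y * Real.log (m v u y)]
      exact sum_congr rfl fun v _ => sum_congr rfl fun u _ => sum_congr rfl fun y _ => by
        rw [Pedge_comm]
    rw [sum_congr rfl fun v _ => sum_congr rfl fun u hu =>
      have huv := G.adj_of_mem_neighborFinset hu
      sum_Pedge_mul_log_Pedge (hm u v huv) (hm v u huv.symm) (hZe u v huv)]
    simp only [sum_add_distrib, sum_sub_distrib, hswap]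
    rfl
  rw [FBethe, hvert, hedge]
  ring

end

/-- **the key Lemma.** Let `𝒯` be a tensor network on `G = (V,E)` with
converged (fixed-point) BP messages `m`, and let `m̂` be the messages rescaled so that
`Σ_{x_e} m̂_{u→v}(x_e) m̂_{v→u}(x_e) = 1` on every edge `(u,v)`.  Then
`e^{-F_Bethe(𝒯)} = ∏_{v∈V} Tr(T_v · ∏_{u∈N_v} m̂_{u→v})`:
the Bethe free-energy estimate of the contraction equals the product over all vertices of
the local contraction of `T_v` with its normalized incoming messages. -/
theorem stmt12 {V : Type*} [Fintype V] [DecidableEq V] {D : ℕ}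
    (G : SimpleGraph V) [DecidableRel G.Adj]
    (T : ∀ v : V, (↥(G.neighborFinset v) → Fin D) → ℝ)
    (hT : ∀ v z, 0 < T v z)
    (m mhat : V → V → Fin D → ℝ)
    (hmpos : ∀ u v, G.Adj u v → ∀ y, 0 < m u v y)
    (hfix : ∀ u v, G.Adj u v → ∀ y, BPupdate G T m v u y = m v u y)
    (hscale : ∀ u v, G.Adj u v → ∃ c : ℝ, 0 < c ∧ ∀ y, mhat u v y = c * m u v y)
    (hnorm : ∀ u v, G.Adj u v → ∑ y : Fin D, mhat u v y * mhat v u y = 1) :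
    Real.exp (-(FBethe G T m)) = ∏ v, Zvert G T mhat v := by
  have hmhat : ∀ u v, G.Adj u v → ∀ y, 0 < mhat u v y := fun u v huv y => by
    obtain ⟨c, hc, hy⟩ := hscale u v huv
    exact hy y ▸ mul_pos hc (hmpos u v huv y)
  have hPv : ∀ v z, Pvert G T mhat v z = Pvert G T m v z :=
    Pvert_eq_of_rescale fun u v huv => (hscale u v huv).imp fun _ hc => ⟨hc.1.ne', hc.2⟩
  have hPe : ∀ u v, G.Adj u v → ∀ y, Pedge mhat u v y = Pedge m u v y := fun u v huv => by
    obtain ⟨a, ha, hau⟩ := hscale u v huv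
    obtain ⟨b, hb, hbv⟩ := hscale v u huv.symm
    exact Pedge_eq_of_rescale ha.ne' hb.ne' hau hbv
  have hZv : ∀ v, 0 < Zvert G T mhat v := fun v =>
    Zvert_pos hT hmhat v ⟨fun w => (univ_nonempty_iff.mp <| nonempty_of_sum_ne_zero <| by
      rw [hnorm w v (G.adj_of_mem_neighborFinset w.2)]; exact one_ne_zero).some⟩
  have hZe : ∀ u v, G.Adj u v → Zedge mhat u v = 1 := hnorm
  rw [← FBethe_congr hPv hPe, ((locallyConsistent_of_isFixedPt hfix).congr hPv hPe).FBethe_eq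
    hT hmhat (fun v => (hZv v).ne') fun u v huv => by simp [hZe u v huv]]
  have hlogZe : ∑ v, ∑ u ∈ G.neighborFinset v, Real.log (Zedge mhat u v) = 0 :=
    sum_eq_zero fun v _ => sum_eq_zero fun u hu => by
      rw [hZe u v (G.adj_of_mem_neighborFinset hu), Real.log_one]
  rw [hlogZe, mul_zero, zero_sub, neg_neg, Real.exp_sum]
  exact prod_congr rfl fun v _ => Real.exp_log (hZv v)
end

section
/- Summing the Bethe free-energies of the star networks over all vertices recovers the Bethe free-energy of the full tensor network: F_Bethe(T) = Σ_{v∈V} F_Bethe(T_v), where T_v is the star network at vertex v built from T_v and the normalized fixed-point incoming messages. -/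
open Finset

variable {V : Type*} [Fintype V] [DecidableEq V] {D : ℕ}

/-- The star graph with center `none` and leaves `some i`, `i : ι`. -/
def starGraph (ι : Type*) : SimpleGraph (Option ι) where
  Adj a b := (a = none ∧ b ≠ none) ∨ (b = none ∧ a ≠ none)
  symm := by tauto
  loopless := ⟨by rintro a (⟨h1, h2⟩ | ⟨h1, h2⟩) <;> exact h2 h1⟩

instance {ι : Type*} [DecidableEq ι] : DecidableRel (starGraph ι).Adj :=
  fun a b => inferInstanceAs (Decidable ((a = none ∧ b ≠ none) ∨ (b = none ∧ a ≠ none)))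

/-- The star tensor network `𝒯_v`: a central tensor `Tc` surrounded by one-leg leaf
tensors `B i` sitting on its neighbors. -/
noncomputable def starT {ι : Type*} [DecidableEq ι] [Fintype ι] {D : ℕ}
    (Tc : (ι → Fin D) → ℝ) (B : ι → Fin D → ℝ) :
    ∀ v : Option ι, (↥((starGraph ι).neighborFinset v) → Fin D) → ℝ :=
  fun v => match v with
  | none => fun z => Tc fun i => z ⟨some i, by
      rw [SimpleGraph.mem_neighborFinset]; simp [starGraph]⟩
  | some i => fun z => B i (z ⟨none, by
      rw [SimpleGraph.mem_neighborFinset]; simp [starGraph]⟩)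

/-- The messages on the star network induced by a set of messages `min` (leaf `i` → center)
and `mout` (center → leaf `i`); the value on non-adjacent pairs is irrelevant. -/
def starMsg {ι : Type*} {D : ℕ} (min mout : ι → Fin D → ℝ) :
    Option ι → Option ι → Fin D → ℝ :=
  fun a b => match a, b with
  | some i, none => min i
  | none, some i => mout i
  | _, _ => fun _ => 1

/-! Once the messages are normalized, every edge marginal is `P_{uv} = m̂_{u→v} m̂_{v→u}`, the
vertex marginal at the centre of the star `𝒯_v` is the vertex marginal of `𝒯` at `v`, and the
vertex marginal at the leaf `u` is `P_{uv}`. Splitting `ln P_{uv} = ln m̂_{u→v} + ln m̂_{v→u}`,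
both sides become `Σ_v F_v − Σ_v Σ_{u ∈ N_v} Σ_y P_{uv}(y) ln m̂_{u→v}(y)`, where `F_v` is the
vertex term of `F_Bethe(𝒯)`: in a star the leaf term `Σ_y P_{uv} ln m̂_{v→u}` cancels half of the
two edge terms, and in `𝒯` the symmetry `u ↔ v` absorbs the factor `1/2`. -/

lemma mul_mul_log_mul (a b : ℝ) :
    a * b * Real.log (a * b) = a * b * Real.log a + a * b * Real.log b := by
  rcases eq_or_ne a 0 with rfl | ha
  · simp
  rcases eq_or_ne b 0 with rfl | hb
  · simp
  rw [Real.log_mul ha hb, mul_add]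

lemma mul_mul_log_mul_div_left (a b : ℝ) :
    a * b * Real.log (a * b / a) = a * b * Real.log b := by
  rcases eq_or_ne a 0 with rfl | ha
  · simp
  rw [mul_div_cancel_left₀ b ha]

lemma sum_neighborFinset_comm {V : Type*} [Fintype V] (G : SimpleGraph V) [DecidableRel G.Adj]
    (f : V → V → ℝ) :
    ∑ v, ∑ u ∈ G.neighborFinset v, f v u = ∑ v, ∑ u ∈ G.neighborFinset v, f u v := by
  simp only [SimpleGraph.neighborFinset_eq_filter, Finset.sum_filter]
  rw [Finset.sum_comm]
  simp only [G.adj_comm]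

section Pedge

variable {V : Type*} {D : ℕ}

lemma Zedge_comm (m : V → V → Fin D → ℝ) (u v : V) : Zedge m u v = Zedge m v u := by
  simp only [Zedge, mul_comm]

lemma Pedge_of_Zedge_eq_one {m : V → V → Fin D → ℝ} {u v : V} (h : Zedge m u v = 1) (y : Fin D) :
    Pedge m u v y = m u v y * m v u y := by
  rw [Pedge, h, div_one]

end Pedge

section VertexFreeEnergy

variable {ι : Type*} [DecidableEq ι] [Fintype ι] {D : ℕ}

noncomputable def vertexMarginal (Tc : (ι → Fin D) → ℝ) (mn : ι → Fin D → ℝ)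
    (x : ι → Fin D) : ℝ :=
  (Tc x * ∏ i, mn i (x i)) / ∑ x' : ι → Fin D, Tc x' * ∏ i, mn i (x' i)

noncomputable def vertexFreeEnergy (Tc : (ι → Fin D) → ℝ) (mn : ι → Fin D → ℝ) : ℝ :=
  ∑ x : ι → Fin D, vertexMarginal Tc mn x * Real.log (vertexMarginal Tc mn x / Tc x)

end VertexFreeEnergy

section Star

variable {ι : Type*} [DecidableEq ι] [Fintype ι] {D : ℕ}

namespace starGraph

lemma some_mem_neighborFinset_none (i : ι) :
    some i ∈ (starGraph ι).neighborFinset none := by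
  rw [SimpleGraph.mem_neighborFinset]; simp [starGraph]

lemma neighborFinset_some (i : ι) : (starGraph ι).neighborFinset (some i) = {none} := by
  ext b
  cases b <;> simp only [SimpleGraph.mem_neighborFinset, Finset.mem_singleton] <;> simp [starGraph]

noncomputable instance (i : ι) : Unique ((starGraph ι).neighborFinset (some i)) where
  default := ⟨none, by simp [neighborFinset_some]⟩
  uniq w := Subtype.ext <| Finset.mem_singleton.mp <| by simpa [neighborFinset_some] using w.2

noncomputable def leafEquiv : ι ≃ (starGraph ι).neighborFinset none :=
  Equiv.ofBijective (fun i => ⟨some i, some_mem_neighborFinset_none i⟩)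
    ⟨fun i j h => Option.some_injective _ (congrArg Subtype.val h), by
      rintro ⟨_ | i, hb⟩
      · rw [SimpleGraph.mem_neighborFinset] at hb; simp [starGraph] at hb
      · exact ⟨i, rfl⟩⟩

lemma sum_neighborFinset_none {M : Type*} [AddCommMonoid M] (g : Option ι → M) :
    ∑ b ∈ (starGraph ι).neighborFinset none, g b = ∑ i, g (some i) := by
  rw [← Finset.sum_coe_sort, ← Equiv.sum_comp leafEquiv]
  rfl

noncomputable def centerAssignEquiv (D : ℕ) :
    ((starGraph ι).neighborFinset none → Fin D) ≃ (ι → Fin D) :=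
  Equiv.arrowCongr leafEquiv.symm (Equiv.refl _)

end starGraph

open starGraph

variable (Tc : (ι → Fin D) → ℝ) (B mn mo : ι → Fin D → ℝ)

lemma prod_starMsg_none (z : (starGraph ι).neighborFinset none → Fin D) :
    ∏ w : (starGraph ι).neighborFinset none, starMsg mn mo w none (z w)
      = ∏ i, mn i (centerAssignEquiv D z i) := by
  rw [← Equiv.prod_comp leafEquiv]
  rfl

lemma Zvert_starGraph_none :
    Zvert (starGraph ι) (starT Tc B) (starMsg mn mo) none
      = ∑ x : ι → Fin D, Tc x * ∏ i, mn i (x i) :=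
  Fintype.sum_equiv (centerAssignEquiv D) _ _ fun z => by
    rw [prod_starMsg_none]
    rfl

lemma Pvert_starGraph_none (z : (starGraph ι).neighborFinset none → Fin D) :
    Pvert (starGraph ι) (starT Tc B) (starMsg mn mo) none z
      = vertexMarginal Tc mn (centerAssignEquiv D z) := by
  rw [Pvert, Zvert_starGraph_none, prod_starMsg_none]
  rfl

lemma Zvert_starGraph_some (i : ι) :
    Zvert (starGraph ι) (starT Tc B) (starMsg mn mo) (some i) = ∑ y, B i y * mo i y :=
  Fintype.sum_equiv (Equiv.funUnique _ _) _ _ fun z => by rw [Fintype.prod_unique]; rfl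

lemma Pvert_starGraph_some {i : ι} (hn : ∑ y, B i y * mo i y = 1)
    (z : (starGraph ι).neighborFinset (some i) → Fin D) :
    Pvert (starGraph ι) (starT Tc B) (starMsg mn mo) (some i) z
      = B i (z default) * mo i (z default) := by
  rw [Pvert, Zvert_starGraph_some, hn, div_one, Fintype.prod_unique]
  rfl

lemma FBethe_starGraph (hn : ∀ i, ∑ y, mn i y * mo i y = 1) :
    FBethe (starGraph ι) (starT Tc mn) (starMsg mn mo)
      = vertexFreeEnergy Tc mn - ∑ i, ∑ y, mn i y * mo i y * Real.log (mn i y) := by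
  have hZ (i : ι) : Zedge (starMsg mn mo) (some i) none = 1 := hn i
  have center : ∑ z, Pvert (starGraph ι) (starT Tc mn) (starMsg mn mo) none z *
      Real.log (Pvert (starGraph ι) (starT Tc mn) (starMsg mn mo) none z / starT Tc mn none z)
        = vertexFreeEnergy Tc mn :=
    Fintype.sum_equiv (centerAssignEquiv D) _ _ fun z => by rw [Pvert_starGraph_none]; rfl
  have leaf (i : ι) : ∑ z, Pvert (starGraph ι) (starT Tc mn) (starMsg mn mo) (some i) z *
      Real.log (Pvert (starGraph ι) (starT Tc mn) (starMsg mn mo) (some i) z /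
        starT Tc mn (some i) z) = ∑ y, mn i y * mo i y * Real.log (mo i y) :=
    Fintype.sum_equiv (Equiv.funUnique _ _) _ _ fun z => by
      rw [Pvert_starGraph_some _ _ _ _ (hn i)]
      exact mul_mul_log_mul_div_left _ _
  have edges_center : ∑ b ∈ (starGraph ι).neighborFinset none, ∑ y,
      Pedge (starMsg mn mo) b none y * Real.log (Pedge (starMsg mn mo) b none y)
        = ∑ i, ∑ y, mn i y * mo i y * Real.log (mn i y * mo i y) := by
    rw [sum_neighborFinset_none]
    simp only [Pedge_of_Zedge_eq_one (hZ _)]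
    rfl
  have edges_leaf (i : ι) : ∑ b ∈ (starGraph ι).neighborFinset (some i), ∑ y,
      Pedge (starMsg mn mo) b (some i) y * Real.log (Pedge (starMsg mn mo) b (some i) y)
        = ∑ y, mn i y * mo i y * Real.log (mn i y * mo i y) := by
    rw [neighborFinset_some, Finset.sum_singleton]
    simp only [Pedge_of_Zedge_eq_one ((Zedge_comm _ _ _).trans (hZ i))]
    exact Finset.sum_congr rfl fun y _ => by rw [mul_comm (mn i y)]; rfl
  rw [FBethe, Fintype.sum_option, Fintype.sum_option, center, Finset.sum_congr rfl fun i _ => leaf i,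
    edges_center, Finset.sum_congr rfl fun i _ => edges_leaf i]
  simp only [mul_mul_log_mul, Finset.sum_add_distrib]
  ring

end Star

lemma FBethe_eq_sum_vertexFreeEnergy_sub (G : SimpleGraph V) [DecidableRel G.Adj]
    (T : ∀ v : V, (↥(G.neighborFinset v) → Fin D) → ℝ) (m : V → V → Fin D → ℝ)
    (hZ : ∀ u v, G.Adj u v → Zedge m u v = 1) :
    FBethe G T m = ∑ v, (vertexFreeEnergy (T v) (fun u y => m u v y)
      - ∑ u : G.neighborFinset v, ∑ y, m u v y * m v u y * Real.log (m u v y)) := by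
  set A := ∑ v, ∑ u ∈ G.neighborFinset v, ∑ y, m u v y * m v u y * Real.log (m u v y)
  have edges : ∑ v, ∑ u ∈ G.neighborFinset v, ∑ y, Pedge m u v y * Real.log (Pedge m u v y)
      = 2 * A := by
    calc _ = A + ∑ v, ∑ u ∈ G.neighborFinset v, ∑ y, m u v y * m v u y * Real.log (m v u y) := by
          rw [← Finset.sum_add_distrib]
          refine Finset.sum_congr rfl fun v _ => ?_
          rw [← Finset.sum_add_distrib]
          refine Finset.sum_congr rfl fun u hu => ?_
          have hZuv := hZ u v (G.adj_symm ((G.mem_neighborFinset v u).mp hu))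
          simp only [Pedge_of_Zedge_eq_one hZuv, mul_mul_log_mul, Finset.sum_add_distrib]
      _ = A + A := by
          rw [sum_neighborFinset_comm G fun v u => ∑ y, m u v y * m v u y * Real.log (m v u y)]
          simp only [A, mul_comm (m _ _ _) (m _ _ _)]
      _ = 2 * A := (two_mul A).symm
  have vertices : ∑ v, ∑ z, Pvert G T m v z * Real.log (Pvert G T m v z / T v z)
      = ∑ v, vertexFreeEnergy (T v) (fun u y => m u v y) := rfl
  have hA : ∑ v, ∑ u : G.neighborFinset v, ∑ y, m u v y * m v u y * Real.log (m u v y) = A :=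
    Finset.sum_congr rfl fun v _ => Finset.sum_coe_sort (G.neighborFinset v)
      fun u => ∑ y, m u v y * m v u y * Real.log (m u v y)
  rw [FBethe, vertices, edges, Finset.sum_sub_distrib, hA]
  ring

theorem stmt16_general {V : Type*} [Fintype V] [DecidableEq V] {D : ℕ}
    (G : SimpleGraph V) [DecidableRel G.Adj]
    (T : ∀ v : V, (↥(G.neighborFinset v) → Fin D) → ℝ)
    (mhat : V → V → Fin D → ℝ)
    (hnorm : ∀ u v, G.Adj u v → ∑ y : Fin D, mhat u v y * mhat v u y = 1) :
    FBethe G T mhat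
      = ∑ v, FBethe (starGraph ↥(G.neighborFinset v))
          (starT (T v) fun u y => mhat (u : V) v y)
          (starMsg (fun u y => mhat (u : V) v y) (fun u y => mhat v (u : V) y)) := by
  rw [FBethe_eq_sum_vertexFreeEnergy_sub G T mhat hnorm]
  refine Finset.sum_congr rfl fun v _ => (FBethe_starGraph _ _ _ fun u => ?_).symm
  exact hnorm u v ((G.mem_neighborFinset v u).mp u.2).symm

/-- Summing the Bethe free-energies of the star networks over all
vertices recovers the Bethe free-energy of the full tensor network:
`F_Bethe(𝒯) = Σ_{v∈V} F_Bethe(𝒯_v)`, where `𝒯_v` is the star network at vertex `v` built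
from the tensor `T_v` and the normalized fixed-point incoming messages `m̂_{u→v}` (its own
BP fixed point consists of the messages `m̂_{u→v}` into, and `m̂_{v→u}` out of, `v`). -/
theorem stmt16 {V : Type*} [Fintype V] [DecidableEq V] {D : ℕ}
    (G : SimpleGraph V) [DecidableRel G.Adj]
    (T : ∀ v : V, (↥(G.neighborFinset v) → Fin D) → ℝ)
    (hT : ∀ v z, 0 < T v z)
    (m mhat : V → V → Fin D → ℝ)
    (hmpos : ∀ u v, G.Adj u v → ∀ y, 0 < m u v y)
    (hfix : ∀ u v, G.Adj u v → ∀ y, BPupdate G T m v u y = m v u y)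
    (hscale : ∀ u v, G.Adj u v → ∃ c : ℝ, 0 < c ∧ ∀ y, mhat u v y = c * m u v y)
    (hnorm : ∀ u v, G.Adj u v → ∑ y : Fin D, mhat u v y * mhat v u y = 1) :
    FBethe G T mhat
      = ∑ v, FBethe (starGraph ↥(G.neighborFinset v))
          (starT (T v) fun u y => mhat (u : V) v y)
          (starMsg (fun u y => mhat (u : V) v y) (fun u y => mhat v (u : V) y)) :=
  stmt16_general G T mhat hnorm
end
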